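/- Let f be an edge q-colouring of a graph G and let v be a vertex with |f(v)| = q adjacent to a pendant vertex u (a degree-1 vertex). Define f' by deleting u and recolouring all edges of colour f(uv) to some other colour c ∈ f(v) with c ≠ f(uv) (if such c exists). Then f' is an edge q-colouring of G − u using at least (number of colours of f) − 1 colours, and |f'(v)| ≤ q − 1 if f(uv) ∉ f'(v). -/

import Mathlib

open Finset

variable {V : Type*}

/-- The set of colours appearing on edges incident to vertex `v`. -/
def vColors (G : SimpleGraph V) (f : V → V → ℕ) (v : V) : Set ℕ :=
  {c | ∃ u, G.Adj v u ∧ f v u = c}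

/-- The set of colours used on edges of `G`. -/
def colorsOf (G : SimpleGraph V) (f : V → V → ℕ) : Set ℕ :=
  {c | ∃ u v, G.Adj u v ∧ f u v = c}

/-- An edge `q`-colouring: a symmetric assignment of colours to edges such that
every vertex is incident with at most `q` distinct colours. -/
def IsEdgeQColoring (G : SimpleGraph V) (q : ℕ) (f : V → V → ℕ) : Prop :=
  (∀ u v, f u v = f v u) ∧ ∀ v, (vColors G f v).ncard ≤ q

/-- `S`-composability: every vertex of `S` sees at most `q - 1` non-zero colours. -/
def IsComposable (G : SimpleGraph V) (q : ℕ) (S : Set V) (f : V → V → ℕ) : Prop :=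
  ∀ v ∈ S, ((vColors G f v) \ {0}).ncard ≤ q - 1

/-- `χ'_q(G, S)`: maximum number of non-zero colours of an `S`-composable edge
`q`-colouring of `G`. -/
noncomputable def chiq (G : SimpleGraph V) (q : ℕ) (S : Set V) : ℕ :=
  sSup {k | ∃ f, IsEdgeQColoring G q f ∧ IsComposable G q S f ∧
    ((colorsOf G f) \ {0}).ncard = k}

/-- `χ'_q(G)`: maximum number of distinct colours of an edge `q`-colouring of `G`. -/
noncomputable def chimax (G : SimpleGraph V) (q : ℕ) : ℕ :=
  sSup {k | ∃ f, IsEdgeQColoring G q f ∧ (colorsOf G f).ncard = k}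

/-- `M` is a matching in `G`: a set of edges, pairwise not sharing a vertex. -/
def IsMatchingSet (G : SimpleGraph V) (M : Set (Sym2 V)) : Prop :=
  M ⊆ G.edgeSet ∧ ∀ e ∈ M, ∀ e' ∈ M, e ≠ e' → ∀ v, v ∈ e → v ∉ e'

/-- `M` is a maximal matching in `G`. -/
def IsMaximalMatchingSet (G : SimpleGraph V) (M : Set (Sym2 V)) : Prop :=
  IsMatchingSet G M ∧ ∀ e ∈ G.edgeSet, ∃ e' ∈ M, ∃ v, v ∈ e ∧ v ∈ e'

/-- `X` is a vertex cover of `G`. -/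
def IsVertexCover (G : SimpleGraph V) (X : Set V) : Prop :=
  ∀ e ∈ G.edgeSet, ∃ v ∈ X, v ∈ e

/-- A layering of `G`. -/
def IsLayering (G : SimpleGraph V) (lam : V → ℤ) : Prop :=
  ∀ u v, G.Adj u v → |lam u - lam v| ≤ 1

/-- The graph part `G_m` of the `(λ, r, m)`-stratification: delete all edges `uv`
with `λ(u) ≡ m` and `λ(v) ≡ m + 1 (mod r)`. -/
def stratGraph (G : SimpleGraph V) (lam : V → ℤ) (r m : ℤ) : SimpleGraph V where
  Adj u v := G.Adj u v ∧
    ¬ ((lam u ≡ m [ZMOD r] ∧ lam v ≡ m + 1 [ZMOD r]) ∨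
       (lam v ≡ m [ZMOD r] ∧ lam u ≡ m + 1 [ZMOD r]))
  symm := ⟨by
    intro u v h
    exact ⟨h.1.symm, fun hc => h.2 hc.symm⟩⟩
  loopless := ⟨fun v h => G.loopless.irrefl v h.1⟩

/-- The set `S_m` of the `(λ, r, m)`-stratification: vertices incident with deleted
edges. -/
def stratSet (G : SimpleGraph V) (lam : V → ℤ) (r m : ℤ) : Set V :=
  {v | ∃ u, G.Adj v u ∧ ¬ (stratGraph G lam r m).Adj v u}

/-! The new colouring is `σ ∘ f` restricted to `G - u`, where `σ` merges the colour `k = f(uv)`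
into `c`. Hence every colour set of the new colouring is the `σ`-image of a subset of the
corresponding colour set of `f`, so no vertex sees more colours than before. Since `uv` is the only
edge at `u`, deleting `u` loses no colour other than `k`; and at `v`, where `c` is already present,
the `σ`-image of `f(v)` is `f(v) \ {k}`. -/

section EdgeColoring

variable {W : Type*} (G : SimpleGraph V) (f : V → V → ℕ)

lemma vColors_comp (σ : ℕ → ℕ) (v : V) :
    vColors G (fun a b => σ (f a b)) v = σ '' vColors G f v := by
  ext d
  constructor
  · rintro ⟨w, hw, rfl⟩
    exact ⟨f v w, ⟨w, hw, rfl⟩, rfl⟩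
  · rintro ⟨_, ⟨w, hw, rfl⟩, rfl⟩
    exact ⟨w, hw, rfl⟩

lemma colorsOf_comp (σ : ℕ → ℕ) :
    colorsOf G (fun a b => σ (f a b)) = σ '' colorsOf G f := by
  ext d
  constructor
  · rintro ⟨a, b, hab, rfl⟩
    exact ⟨f a b, ⟨a, b, hab, rfl⟩, rfl⟩
  · rintro ⟨_, ⟨a, b, hab, rfl⟩, rfl⟩
    exact ⟨a, b, hab, rfl⟩

lemma vColors_comap_subset (φ : W → V) (a : W) :
    vColors (G.comap φ) (fun a b => f (φ a) (φ b)) a ⊆ vColors G f (φ a) := by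
  rintro _ ⟨b, hab, rfl⟩
  exact ⟨φ b, hab, rfl⟩

lemma vColors_finite [Finite V] (v : V) : (vColors G f v).Finite :=
  (Set.finite_range (f v)).subset <| by
    rintro _ ⟨w, _, rfl⟩
    exact ⟨w, rfl⟩

lemma colorsOf_finite [Finite V] : (colorsOf G f).Finite :=
  (Set.finite_range fun p : V × V => f p.1 p.2).subset <| by
    rintro _ ⟨a, b, _, rfl⟩
    exact ⟨(a, b), rfl⟩

lemma IsEdgeQColoring.comp_comap [Finite V] {q : ℕ} (hf : IsEdgeQColoring G q f) (φ : W → V)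
    (σ : ℕ → ℕ) : IsEdgeQColoring (G.comap φ) q (fun a b => σ (f (φ a) (φ b))) := by
  refine ⟨fun a b => congrArg σ (hf.1 _ _), fun a => ?_⟩
  rw [vColors_comp (G.comap φ) (fun a b => f (φ a) (φ b))]
  calc (σ '' vColors (G.comap φ) (fun a b => f (φ a) (φ b)) a).ncard
      ≤ (σ '' vColors G f (φ a)).ncard :=
        Set.ncard_le_ncard (Set.image_mono (vColors_comap_subset G f φ a))
          ((vColors_finite G f _).image σ)
    _ ≤ (vColors G f (φ a)).ncard := Set.ncard_image_le (vColors_finite G f _)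
    _ ≤ q := hf.2 _

lemma colorsOf_diff_subset_comap_ne (hsymm : ∀ a b, f a b = f b a) {u : V} {k : ℕ}
    (hu : ∀ w, G.Adj u w → f u w = k) :
    colorsOf G f \ {k} ⊆
      colorsOf (G.comap fun w : {w : V // w ≠ u} => (w : V)) (fun a b => f a b) := by
  rintro _ ⟨⟨a, b, hab, rfl⟩, hk⟩
  have hau : a ≠ u := by
    rintro rfl
    exact hk (hu b hab)
  have hbu : b ≠ u := by
    rintro rfl
    exact hk ((hsymm a b).trans (hu a hab.symm))
  exact ⟨⟨a, hau⟩, ⟨b, hbu⟩, hab, rfl⟩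

end EdgeColoring

lemma image_merge_subset_diff {S : Set ℕ} {k c : ℕ} (hc : c ∈ S) (hck : c ≠ k) :
    (fun d => if d = k then c else d) '' S ⊆ S \ {k} := by
  rintro _ ⟨d, hd, rfl⟩
  dsimp only
  split_ifs with hdk
  · exact ⟨hc, hck⟩
  · exact ⟨hd, hdk⟩

lemma eq_of_neighborSet_ncard_eq_one {G : SimpleGraph V} {u v w : V}
    (hdeg : (G.neighborSet u).ncard = 1) (hv : G.Adj u v) (hw : G.Adj u w) : w = v := by
  obtain ⟨x, hx⟩ := Set.ncard_eq_one.mp hdeg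
  have hv' : v ∈ G.neighborSet u := hv
  have hw' : w ∈ G.neighborSet u := hw
  rw [hx, Set.mem_singleton_iff] at hv' hw'
  exact hw'.trans hv'.symm

theorem stmt15_general [Fintype V] (G : SimpleGraph V) (q : ℕ)
    (f : V → V → ℕ) (hf : IsEdgeQColoring G q f) (u v : V) (hadj : G.Adj v u)
    (hdeg : (G.neighborSet u).ncard = 1) (hsat : (vColors G f v).ncard = q)
    (c : ℕ) (hc : c ∈ vColors G f v) (hcne : c ≠ f v u) :
    IsEdgeQColoring (G.comap (fun w : {w : V // w ≠ u} => (w : V))) q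
      (fun a b : {w : V // w ≠ u} =>
        if f (a : V) (b : V) = f v u then c else f (a : V) (b : V)) ∧
    (colorsOf G f).ncard - 1 ≤
      (colorsOf (G.comap (fun w : {w : V // w ≠ u} => (w : V)))
        (fun a b : {w : V // w ≠ u} =>
          if f (a : V) (b : V) = f v u then c else f (a : V) (b : V))).ncard ∧
    (f v u ∉ vColors (G.comap (fun w : {w : V // w ≠ u} => (w : V)))
        (fun a b : {w : V // w ≠ u} =>
          if f (a : V) (b : V) = f v u then c else f (a : V) (b : V)) ⟨v, hadj.ne⟩ →
      (vColors (G.comap (fun w : {w : V // w ≠ u} => (w : V)))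
        (fun a b : {w : V // w ≠ u} =>
          if f (a : V) (b : V) = f v u then c else f (a : V) (b : V)) ⟨v, hadj.ne⟩).ncard
        ≤ q - 1) := by
  set k := f v u
  set σ : ℕ → ℕ := fun d => if d = k then c else d
  set G' := G.comap fun w : {w : V // w ≠ u} => (w : V)
  set g : {w : V // w ≠ u} → {w : V // w ≠ u} → ℕ := fun a b => f a b
  have hk : k ∈ vColors G f v := ⟨u, hadj, rfl⟩
  have hpendant : ∀ w, G.Adj u w → f u w = k := fun w hw => by
    rw [eq_of_neighborSet_ncard_eq_one hdeg hadj.symm hw, hf.1]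
  refine ⟨hf.comp_comap G f Subtype.val σ, ?_, fun _ => ?_⟩
  · have hlost : colorsOf G f \ {k} ⊆ colorsOf G' (fun a b => σ (g a b)) := by
      rw [colorsOf_comp]
      intro d hd
      exact ⟨d, colorsOf_diff_subset_comap_ne G f hf.1 hpendant hd, if_neg hd.2⟩
    calc (colorsOf G f).ncard - 1 ≤ (colorsOf G f \ {k}).ncard :=
          Set.pred_ncard_le_ncard_sdiff_singleton _ _
      _ ≤ _ := Set.ncard_le_ncard hlost (colorsOf_finite _ _)
  · change (vColors G' (fun a b => σ (g a b)) ⟨v, hadj.ne⟩).ncard ≤ q - 1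
    have hsub : vColors G' (fun a b => σ (g a b)) ⟨v, hadj.ne⟩ ⊆ vColors G f v \ {k} := by
      rw [vColors_comp]
      exact (Set.image_mono (vColors_comap_subset G f Subtype.val _)).trans
        (image_merge_subset_diff hc hcne)
    calc _ ≤ (vColors G f v \ {k}).ncard := Set.ncard_le_ncard hsub (vColors_finite G f v).sdiff
      _ = q - 1 := by rw [Set.ncard_sdiff_singleton_of_mem hk, hsat]

/-- merging the colour of the pendant edge `uv` into another colour
`c` seen at `v` and deleting the pendant vertex `u` yields an edge `q`-colouring
of `G − u` losing at most one colour; moreover if `f(uv)` no longer appears at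
`v`, then `v` sees at most `q − 1` colours. -/
theorem stmt15 [Fintype V] [DecidableEq V] (G : SimpleGraph V) (q : ℕ)
    (f : V → V → ℕ) (hf : IsEdgeQColoring G q f) (u v : V) (hadj : G.Adj v u)
    (hdeg : (G.neighborSet u).ncard = 1) (hsat : (vColors G f v).ncard = q)
    (c : ℕ) (hc : c ∈ vColors G f v) (hcne : c ≠ f v u) :
    IsEdgeQColoring (G.comap (fun w : {w : V // w ≠ u} => (w : V))) q
      (fun a b : {w : V // w ≠ u} =>
        if f (a : V) (b : V) = f v u then c else f (a : V) (b : V)) ∧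
    (colorsOf G f).ncard - 1 ≤
      (colorsOf (G.comap (fun w : {w : V // w ≠ u} => (w : V)))
        (fun a b : {w : V // w ≠ u} =>
          if f (a : V) (b : V) = f v u then c else f (a : V) (b : V))).ncard ∧
    (f v u ∉ vColors (G.comap (fun w : {w : V // w ≠ u} => (w : V)))
        (fun a b : {w : V // w ≠ u} =>
          if f (a : V) (b : V) = f v u then c else f (a : V) (b : V)) ⟨v, hadj.ne⟩ →
      (vColors (G.comap (fun w : {w : V // w ≠ u} => (w : V)))
        (fun a b : {w : V // w ≠ u} =>
          if f (a : V) (b : V) = f v u then c else f (a : V) (b : V)) ⟨v, hadj.ne⟩).ncard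
        ≤ q - 1) :=
  stmt15_general G q f hf u v hadj hdeg hsat c hc hcne
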